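/- (O(1/t) convergence of proximal gradient descent) Let ξ = f + g with f convex differentiable with C_f-Lipschitz gradient, g convex, and suppose ξ attains its minimum at x*. With constant step size η ∈ (0, 1/C_f] and iterates x^{t+1} = prox_{ηg}(x^t − η∇f(x^t)), for every t ≥ 1: ξ(x^t) − ξ(x*) ≤ ‖x⁰ − x*‖²/(2tη). -/

import Mathlib

open RealInnerProductSpace

variable {n : ℕ}

/-- The convex subdifferential of `g` at `x`. -/
def subdiff (g : EuclideanSpace ℝ (Fin n) → ℝ) (x : EuclideanSpace ℝ (Fin n)) :
    Set (EuclideanSpace ℝ (Fin n)) :=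
  {v | ∀ y, g x + ⟪v, y - x⟫ ≤ g y}

/-- `z` is the value of the proximal operator `prox_{ηg}` at `v`, i.e. `z` minimizes
`x ↦ g x + (1/(2η))‖x − v‖²`. -/
def IsProx (g : EuclideanSpace ℝ (Fin n) → ℝ) (η : ℝ)
    (v z : EuclideanSpace ℝ (Fin n)) : Prop :=
  ∀ x, g z + 1 / (2 * η) * ‖z - v‖ ^ 2 ≤ g x + 1 / (2 * η) * ‖x - v‖ ^ 2

open scoped Classical in
/-- The proximal operator `prox_{ηg}` (defined via choice of a minimizer). -/
noncomputable def prox (g : EuclideanSpace ℝ (Fin n) → ℝ) (η : ℝ)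
    (v : EuclideanSpace ℝ (Fin n)) : EuclideanSpace ℝ (Fin n) :=
  if h : ∃ z, IsProx g η v z then h.choose else 0

/-!
Every proximal gradient step satisfies, for every point `z`,
`ξ(x⁺) ≤ ξ(z) + (‖x - z‖² - ‖x⁺ - z‖²) / (2η)`: add the descent lemma for `f` (where `η C_f ≤ 1`
enters), the first-order convexity inequality for `f` at `x`, and the optimality condition
`η⁻¹ (v - prox v) ∈ ∂g (prox v)` of the proximal step. With `z = x` this shows that `ξ` decreases
along the iterates; with `z = x*` the distance terms telescope, and monotonicity turns the sum of
the `t` gaps into `t` times the last one.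
-/

open Set Filter Topology AffineMap Metric

section Gradient

variable {E : Type*} [NormedAddCommGroup E] [InnerProductSpace ℝ E] [CompleteSpace E]
  {f : E → ℝ}

theorem hasDerivAt_comp_lineMap {p y : E} {s : ℝ}
    (hf : DifferentiableAt ℝ f (lineMap p y s)) :
    HasDerivAt (f ∘ lineMap p y) ⟪gradient f (lineMap p y s), y - p⟫ s := by
  simpa [InnerProductSpace.toDual_apply_apply] using
    hf.hasGradientAt.hasFDerivAt.comp_hasDerivAt s hasDerivAt_lineMap

theorem le_add_inner_gradient_add_sq_of_lipschitz (hfd : Differentiable ℝ f) {C : ℝ}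
    (hlip : ∀ x y, ‖gradient f x - gradient f y‖ ≤ C * ‖x - y‖) (p y : E) :
    f y ≤ f p + ⟪gradient f p, y - p⟫ + C / 2 * ‖y - p‖ ^ 2 := by
  set d := y - p
  set B : ℝ → ℝ := fun s => f p + s * ⟪gradient f p, d⟫ + C / 2 * ‖d‖ ^ 2 * s ^ 2
  have hφ (s : ℝ) : HasDerivAt (f ∘ lineMap p y) ⟪gradient f (lineMap p y s), d⟫ s :=
    hasDerivAt_comp_lineMap (hfd _)
  have hB (s : ℝ) : HasDerivAt B (⟪gradient f p, d⟫ + C * ‖d‖ ^ 2 * s) s := by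
    have := (((hasDerivAt_id s).mul_const ⟪gradient f p, d⟫).const_add (f p)).add
      ((hasDerivAt_pow 2 s).const_mul (C / 2 * ‖d‖ ^ 2))
    exact this.congr_deriv (by simp; ring)
  have hbound : ∀ s ∈ Ico (0 : ℝ) 1,
      ⟪gradient f (lineMap p y s), d⟫ ≤ ⟪gradient f p, d⟫ + C * ‖d‖ ^ 2 * s := by
    intro s hs
    have hstep : lineMap p y s - p = s • d := lineMap_vsub_left p y s
    calc ⟪gradient f (lineMap p y s), d⟫
        = ⟪gradient f p, d⟫ + ⟪gradient f (lineMap p y s) - gradient f p, d⟫ := by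
          rw [inner_sub_left]; ring
      _ ≤ ⟪gradient f p, d⟫ + C * ‖lineMap p y s - p‖ * ‖d‖ := by
          gcongr
          exact (real_inner_le_norm _ _).trans
            (mul_le_mul_of_nonneg_right (hlip _ _) (norm_nonneg d))
      _ = ⟪gradient f p, d⟫ + C * ‖d‖ ^ 2 * s := by
          rw [hstep, norm_smul, Real.norm_of_nonneg hs.1]; ring
  have key := image_le_of_deriv_right_le_deriv_boundary
    (fun s _ => (hφ s).continuousAt.continuousWithinAt)
    (fun s _ => (hφ s).hasDerivWithinAt) (by simp [B])
    (fun s _ => (hB s).continuousAt.continuousWithinAt)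
    (fun s _ => (hB s).hasDerivWithinAt) hbound (right_mem_Icc.mpr zero_le_one)
  simpa [B] using key

theorem ConvexOn.add_inner_gradient_le (hf : ConvexOn ℝ univ f) {p : E}
    (hfd : DifferentiableAt ℝ f p) (y : E) : f p + ⟪gradient f p, y - p⟫ ≤ f y := by
  have hline : ConvexOn ℝ univ (f ∘ lineMap p y) := hf.comp_affineMap (lineMap p y)
  have := hline.le_slope_of_hasDerivAt (mem_univ 0) (mem_univ 1) zero_lt_one
    (hasDerivAt_comp_lineMap (by rwa [lineMap_apply_zero]))
  simp only [slope_def_field, Function.comp_apply, lineMap_apply_zero, lineMap_apply_one] at this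
  linarith

end Gradient

section FiniteDimensional

variable {E : Type*} [NormedAddCommGroup E] [NormedSpace ℝ E] [FiniteDimensional ℝ E]
  {g : E → ℝ}

theorem ConvexOn.exists_sub_mul_norm_sub_le (hg : ConvexOn ℝ univ g) (v : E) :
    ∃ m K : ℝ, ∀ x, m - K * ‖x - v‖ ≤ g x := by
  -- For `‖x - v‖ > 1`, convexity on the segment from `v` to `x` compares `g x` with the value of
  -- `g` where that segment leaves the unit ball, which is at least the minimum `g w` on the ball.
  obtain ⟨w, -, hw⟩ := (isCompact_closedBall v 1).exists_isMinOn
    (nonempty_closedBall.mpr zero_le_one) ((hg.continuousOn isOpen_univ).mono (subset_univ _))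
  refine ⟨g w, g v - g w, fun x => ?_⟩
  have hwv : g w ≤ g v := hw (mem_closedBall_self zero_le_one)
  rcases le_or_gt ‖x - v‖ 1 with hx | hx
  · have hwx : g w ≤ g x := hw (mem_closedBall_iff_norm.mpr hx)
    nlinarith [norm_nonneg (x - v)]
  · set r := ‖x - v‖
    have hr : 0 < r := zero_lt_one.trans hx
    have hy : lineMap v x r⁻¹ ∈ closedBall v 1 := by
      rw [mem_closedBall_iff_norm, ← vsub_eq_sub, lineMap_vsub_left, norm_smul, vsub_eq_sub,
        norm_inv, Real.norm_of_nonneg hr.le, inv_mul_cancel₀ hr.ne']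
    have hconv : g (lineMap v x r⁻¹) ≤ (1 - r⁻¹) * g v + r⁻¹ * g x := by
      rw [lineMap_apply_module]
      exact hg.2 (mem_univ _) (mem_univ _) (sub_nonneg.mpr (inv_le_one_of_one_le₀ hx.le))
        (by positivity) (by ring)
    have hscaled : r * g w ≤ r * ((1 - r⁻¹) * g v + r⁻¹ * g x) :=
      mul_le_mul_of_nonneg_left ((hw hy).trans hconv) hr.le
    have hexpand : r * ((1 - r⁻¹) * g v + r⁻¹ * g x) = (r - 1) * g v + g x := by
      field_simp
    nlinarith

theorem ConvexOn.exists_forall_add_mul_norm_sub_sq_le (hg : ConvexOn ℝ univ g) {c : ℝ}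
    (hc : 0 < c) (v : E) : ∃ z, ∀ x, g z + c * ‖z - v‖ ^ 2 ≤ g x + c * ‖x - v‖ ^ 2 := by
  obtain ⟨m, K, hmK⟩ := hg.exists_sub_mul_norm_sub_le v
  have hgc : Continuous g := continuousOn_univ.mp (hg.continuousOn isOpen_univ)
  refine Continuous.exists_forall_le (by fun_prop) ?_
  have hquad : Tendsto (fun r : ℝ => m - K * r + c * r ^ 2) atTop atTop := by
    have := tendsto_id.atTop_mul_atTop₀
      (tendsto_atTop_add_const_right _ (-K) (tendsto_id.const_mul_atTop hc))
    exact (tendsto_atTop_add_const_left _ m this).congr fun r => by simp; ring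
  refine tendsto_atTop_mono (fun x => ?_) (hquad.comp (tendsto_dist_right_cocompact_atTop v))
  simp only [Function.comp_apply, dist_eq_norm]
  linarith [hmK x]

end FiniteDimensional

theorem IsProx.inv_smul_sub_mem_subdiff {g : EuclideanSpace ℝ (Fin n) → ℝ}
    (hg : ConvexOn ℝ univ g) {η : ℝ} (hη : 0 < η) {v z : EuclideanSpace ℝ (Fin n)}
    (hz : IsProx g η v z) : η⁻¹ • (v - z) ∈ subdiff g z := by
  -- Compare `z` with the points `lineMap z y θ` of the segment towards `y`, then let `θ → 0`.
  intro y
  set d := y - z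
  set K := 1 / (2 * η) * ‖d‖ ^ 2
  have hsmall : ∀ θ ∈ Ioc (0 : ℝ) 1, g z + ⟪η⁻¹ • (v - z), d⟫ - g y ≤ θ * K := by
    intro θ hθ
    have hmin := hz (lineMap z y θ)
    have hconv : g (lineMap z y θ) ≤ (1 - θ) * g z + θ * g y := by
      rw [lineMap_apply_module]
      exact hg.2 (mem_univ _) (mem_univ _) (sub_nonneg.mpr hθ.2) hθ.1.le (by ring)
    have hnorm : ‖lineMap z y θ - v‖ ^ 2 = ‖z - v‖ ^ 2 + 2 * θ * ⟪z - v, d⟫ + θ ^ 2 * ‖d‖ ^ 2 := by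
      rw [lineMap_apply_module', show θ • d + z - v = (z - v) + θ • d by abel, norm_add_sq_real,
        real_inner_smul_right, norm_smul, mul_pow, Real.norm_eq_abs, sq_abs]
      ring
    have hinner : ⟪η⁻¹ • (v - z), d⟫ = -(2 * (1 / (2 * η))) * ⟪z - v, d⟫ := by
      rw [real_inner_smul_left, ← neg_sub z v, inner_neg_left]
      field_simp
    rw [hnorm] at hmin
    rw [hinner]
    refine le_of_mul_le_mul_left ?_ hθ.1
    linarith
  have hlim : Tendsto (fun θ : ℝ => θ * K) (𝓝[>] 0) (𝓝 0) :=
    ((continuous_mul_const K).tendsto' 0 0 (zero_mul K)).mono_left nhdsWithin_le_nhds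
  have := ge_of_tendsto hlim (eventually_of_mem (Ioc_mem_nhdsGT zero_lt_one) hsmall)
  linarith

theorem exists_isProx {g : EuclideanSpace ℝ (Fin n) → ℝ} (hg : ConvexOn ℝ univ g) {η : ℝ}
    (hη : 0 < η) (v : EuclideanSpace ℝ (Fin n)) : ∃ z, IsProx g η v z :=
  hg.exists_forall_add_mul_norm_sub_sq_le (by positivity) v

theorem isProx_prox {g : EuclideanSpace ℝ (Fin n) → ℝ} (hg : ConvexOn ℝ univ g) {η : ℝ}
    (hη : 0 < η) (v : EuclideanSpace ℝ (Fin n)) : IsProx g η v (prox g η v) := by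
  have hex := exists_isProx hg hη v
  rw [prox, dif_pos hex]
  exact hex.choose_spec

theorem IsProx.add_le_of_gradient_step {f g : EuclideanSpace ℝ (Fin n) → ℝ}
    (hf : ConvexOn ℝ univ f) (hfd : Differentiable ℝ f) (hg : ConvexOn ℝ univ g) {C η : ℝ}
    (hlip : ∀ x y, ‖gradient f x - gradient f y‖ ≤ C * ‖x - y‖) (hη : 0 < η) (hCη : C ≤ η⁻¹)
    {p q : EuclideanSpace ℝ (Fin n)} (hq : IsProx g η (p - η • gradient f p) q)
    (z : EuclideanSpace ℝ (Fin n)) :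
    f q + g q ≤ f z + g z + (‖p - z‖ ^ 2 - ‖q - z‖ ^ 2) / (2 * η) := by
  set G := gradient f p
  have hsmooth := le_add_inner_gradient_add_sq_of_lipschitz hfd hlip p q
  have hcvx := hf.add_inner_gradient_le (hfd p) z
  have hprox := hq.inv_smul_sub_mem_subdiff hg hη z
  have hstep : η⁻¹ • (p - η • G - q) = η⁻¹ • (p - q) - G := by
    rw [sub_right_comm, smul_sub, inv_smul_smul₀ hη.ne']
  rw [hstep, inner_sub_left, real_inner_smul_left] at hprox
  have hC : C / 2 * ‖q - p‖ ^ 2 ≤ η⁻¹ / 2 * ‖q - p‖ ^ 2 := by gcongr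
  have hG : ⟪G, z - p⟫ = ⟪G, z - q⟫ + ⟪G, q - p⟫ := by
    rw [← inner_add_right, sub_add_sub_cancel]
  have hthree : ‖p - z‖ ^ 2 = ‖q - p‖ ^ 2 - 2 * ⟪p - q, z - q⟫ + ‖q - z‖ ^ 2 := by
    rw [← sub_add_sub_cancel p q z, norm_add_sq_real, norm_sub_rev p q, ← neg_sub z q,
      inner_neg_right]
    ring
  rw [hthree, show ∀ a : ℝ, a / (2 * η) = η⁻¹ / 2 * a from fun a => by ring]
  linarith

theorem Antitone.natCast_mul_sub_le {F d : ℕ → ℝ} {a : ℝ} (hF : Antitone F)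
    (hd : ∀ s, 0 ≤ d s) (hstep : ∀ s, F (s + 1) - a ≤ d s - d (s + 1)) (t : ℕ) :
    t * (F t - a) ≤ d 0 := by
  suffices ∀ t : ℕ, t * (F t - a) + d t ≤ d 0 from (this t).trans' (by linarith [hd t])
  intro t
  induction t with
  | zero => simp
  | succ t ih =>
    have hmono : (t : ℝ) * F (t + 1) ≤ t * F t :=
      mul_le_mul_of_nonneg_left (hF t.le_succ) t.cast_nonneg
    push_cast
    linarith [hstep t]

theorem prox_grad_convergence_rate_general (f g : EuclideanSpace ℝ (Fin n) → ℝ)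
    (hf : ConvexOn ℝ Set.univ f) (hfd : Differentiable ℝ f)
    (hg : ConvexOn ℝ Set.univ g) (Cf : ℝ) (hCf : 0 < Cf)
    (hlip : ∀ x y, ‖gradient f x - gradient f y‖ ≤ Cf * ‖x - y‖)
    (η : ℝ) (hη : 0 < η) (hη' : η ≤ 1 / Cf)
    (xstar : EuclideanSpace ℝ (Fin n))
    (x : ℕ → EuclideanSpace ℝ (Fin n))
    (hiter : ∀ t : ℕ, x (t + 1) = prox g η (x t - η • gradient f (x t))) :
    ∀ t : ℕ, 1 ≤ t →
      f (x t) + g (x t) - (f xstar + g xstar) ≤ ‖x 0 - xstar‖ ^ 2 / (2 * t * η) := by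
  intro t ht
  have hCη : Cf ≤ η⁻¹ := (le_inv_comm₀ hη hCf).mp (one_div Cf ▸ hη')
  have hstep (s : ℕ) (z : EuclideanSpace ℝ (Fin n)) :=
    (hiter s ▸ isProx_prox hg hη _).add_le_of_gradient_step hf hfd hg hlip hη hCη z
  have hanti : Antitone fun s => f (x s) + g (x s) := antitone_nat_of_succ_le fun s => by
    have := hstep s (x s)
    rw [sub_self, norm_zero, zero_pow two_ne_zero, zero_sub, neg_div] at this
    linarith [div_nonneg (sq_nonneg ‖x (s + 1) - x s‖) (by positivity : (0 : ℝ) ≤ 2 * η)]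
  have hdescent (s : ℕ) : f (x (s + 1)) + g (x (s + 1)) - (f xstar + g xstar) ≤
      ‖x s - xstar‖ ^ 2 / (2 * η) - ‖x (s + 1) - xstar‖ ^ 2 / (2 * η) := by
    rw [← sub_div]
    linarith [hstep s xstar]
  have hrate := hanti.natCast_mul_sub_le (fun s => by positivity) hdescent t
  rw [show ‖x 0 - xstar‖ ^ 2 / (2 * t * η) = ‖x 0 - xstar‖ ^ 2 / (2 * η) / t by ring]
  exact (le_div_iff₀' (by exact_mod_cast ht)).mpr hrate

/-- `O(1/t)` convergence of proximal gradient descent with constant step size. -/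
theorem prox_grad_convergence_rate (f g : EuclideanSpace ℝ (Fin n) → ℝ)
    (hf : ConvexOn ℝ Set.univ f) (hfd : Differentiable ℝ f)
    (hg : ConvexOn ℝ Set.univ g) (Cf : ℝ) (hCf : 0 < Cf)
    (hlip : ∀ x y, ‖gradient f x - gradient f y‖ ≤ Cf * ‖x - y‖)
    (η : ℝ) (hη : 0 < η) (hη' : η ≤ 1 / Cf)
    (xstar : EuclideanSpace ℝ (Fin n)) (hmin : ∀ y, f xstar + g xstar ≤ f y + g y)
    (x : ℕ → EuclideanSpace ℝ (Fin n))
    (hiter : ∀ t : ℕ, x (t + 1) = prox g η (x t - η • gradient f (x t))) :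
    ∀ t : ℕ, 1 ≤ t →
      f (x t) + g (x t) - (f xstar + g xstar) ≤ ‖x 0 - xstar‖ ^ 2 / (2 * t * η) :=
  prox_grad_convergence_rate_general f g hf hfd hg Cf hCf hlip η hη hη' xstar x hiter
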